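/- There exist 72 unit vectors v_1, …, v_72 in R^24, pairwise satisfying |⟨v_i, v_j⟩| = 1/5 for i ≠ j, such that every v_i is orthogonal to each of the five vectors e_1 − e_2, e_1 − e_3, c = 4e_1 + Σ_{i=1}^{24} e_i, c_1 = e_2 + e_3 + e_10 + e_12 + e_13 + e_14 + e_21 + e_24, and c_2 = e_2 + e_3 + e_6 + e_7 + e_18 + e_19 + e_22 + e_23. In particular, these 72 vectors lie in a 19-dimensional subspace of R^24 and form 72 equiangular lines in R^19 with angle arccos(1/5). -/

import Mathlib

/-- The standard basis vector `e_i` of `ℝ^24` (0-indexed). -/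
noncomputable def stdBasisR24 (i : Fin 24) : EuclideanSpace ℝ (Fin 24) :=
  EuclideanSpace.single i 1

/-- The vector `c = 4 e₁ + ∑_{i=1}^{24} e_i`. -/
noncomputable def cVec : EuclideanSpace ℝ (Fin 24) :=
  (4 : ℝ) • stdBasisR24 0 + ∑ i, stdBasisR24 i

/-- The vector `c₁ = e₂ + e₃ + e₁₀ + e₁₂ + e₁₃ + e₁₄ + e₂₁ + e₂₄`. -/
noncomputable def c1Vec : EuclideanSpace ℝ (Fin 24) :=
  stdBasisR24 1 + stdBasisR24 2 + stdBasisR24 9 + stdBasisR24 11 +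
    stdBasisR24 12 + stdBasisR24 13 + stdBasisR24 20 + stdBasisR24 23

/-- The vector `c₂ = e₂ + e₃ + e₆ + e₇ + e₁₈ + e₁₉ + e₂₂ + e₂₃`. -/
noncomputable def c2Vec : EuclideanSpace ℝ (Fin 24) :=
  stdBasisR24 1 + stdBasisR24 2 + stdBasisR24 5 + stdBasisR24 6 +
    stdBasisR24 17 + stdBasisR24 18 + stdBasisR24 21 + stdBasisR24 22

/-!
The 72 vectors are the rows of an explicit `{-1, 3}`-matrix divided by `√80`: every row has
squared length 80 and any two distinct rows have inner product `±16`, so the normalized rows are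
unit vectors with mutual inner products `±1/5`. Every row is orthogonal to the five integer
vectors of the statement, whose Gram matrix has determinant 1728; so these are linearly
independent and their orthogonal complement is a 19-dimensional subspace containing all 72
vectors.
-/

open Module Submodule
open scoped RealInnerProductSpace Matrix

section InnerProductSpace

variable {E : Type*} [NormedAddCommGroup E] [InnerProductSpace ℝ E]

theorem real_inner_inv_sqrt_smul {d : ℝ} (hd : 0 ≤ d) (x y : E) :
    ⟪(√d)⁻¹ • x, (√d)⁻¹ • y⟫ = ⟪x, y⟫ / d := by
  rw [real_inner_smul_left, real_inner_smul_right, ← mul_assoc, ← mul_inv, Real.mul_self_sqrt hd,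
    inv_mul_eq_div]

theorem norm_inv_sqrt_smul_of_inner_self {x : E} {d : ℝ} (hd : d ≠ 0) (h : ⟪x, x⟫ = d) :
    ‖(√d)⁻¹ • x‖ = 1 := by
  have hsq : ‖(√d)⁻¹ • x‖ ^ 2 = 1 := by
    rw [← real_inner_self_eq_norm_sq, real_inner_inv_sqrt_smul (h ▸ real_inner_self_nonneg), h,
      div_self hd]
  exact (pow_eq_one_iff_of_nonneg (norm_nonneg _) two_ne_zero).1 hsq

theorem mem_orthogonal_span_range_iff {ι : Type*} {w : ι → E} {v : E} :
    v ∈ (span ℝ (Set.range w))ᗮ ↔ ∀ k, ⟪v, w k⟫ = 0 := by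
  rw [← span_singleton_le_iff_mem, ← isOrtho_iff_le, isOrtho_span]
  simp

theorem finrank_orthogonal_span_range [FiniteDimensional ℝ E] {ι : Type*} [Fintype ι]
    {w : ι → E} (hw : LinearIndependent ℝ w) :
    finrank ℝ (span ℝ (Set.range w))ᗮ = finrank ℝ E - Fintype.card ι := by
  rw [← (span ℝ (Set.range w)).finrank_add_finrank_orthogonal, finrank_span_eq_card hw,
    Nat.add_sub_cancel_left]

end InnerProductSpace

section IntVec

variable {n : Type*}

noncomputable def intVec (w : n → ℤ) : EuclideanSpace ℝ n :=
  WithLp.toLp 2 fun j => (w j : ℝ)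

variable [Fintype n]

theorem inner_intVec (v w : n → ℤ) : ⟪intVec v, intVec w⟫ = ((v ⬝ᵥ w : ℤ) : ℝ) := by
  simp [intVec, EuclideanSpace.inner_eq_star_dotProduct, dotProduct, mul_comm]

theorem gram_intVec {m : Type*} (C : Matrix m n ℤ) :
    Matrix.gram ℝ (fun k => intVec (C k)) = (C * Cᵀ).map (Int.cast) := by
  ext k l
  simp [inner_intVec, Matrix.mul_apply, dotProduct]

theorem linearIndependent_intVec_of_det_ne_zero {m : Type*} [Fintype m] [DecidableEq m]
    {C : Matrix m n ℤ} (hC : (C * Cᵀ).det ≠ 0) :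
    LinearIndependent ℝ fun k => intVec (C k) := by
  refine Matrix.linearIndependent_of_det_gram_ne_zero ?_
  rwa [gram_intVec, ← Int.cast_det, Int.cast_ne_zero]

end IntVec

namespace Equiangular72

def lineMatrix : Matrix (Fin 72) (Fin 24) ℤ :=
  !![-1, -1, -1, -1, 3, 3, -1, 3, 3, 3, -1, -1, -1, -1, -1, -1, -1, -1, -1, -1, -1, 3, -1, 3;
    -1, -1, -1, -1, -1, -1, -1, -1, 3, 3, -1, -1, -1, 3, 3, -1, -1, -1, -1, 3, -1, 3, 3, -1;
    -1, -1, -1, 3, -1, 3, 3, -1, -1, -1, 3, 3, 3, -1, 3, -1, -1, -1, -1, -1, -1, -1, -1, -1;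
    -1, -1, -1, 3, 3, -1, 3, 3, -1, 3, -1, -1, 3, -1, -1, -1, -1, -1, 3, -1, -1, -1, -1, -1;
    -1, -1, -1, 3, -1, -1, -1, -1, -1, 3, -1, -1, 3, -1, 3, 3, -1, 3, -1, -1, -1, -1, 3, -1;
    -1, -1, -1, -1, -1, 3, 3, -1, 3, -1, -1, 3, -1, -1, -1, 3, 3, -1, -1, -1, -1, -1, -1, 3;
    -1, -1, -1, -1, -1, -1, 3, 3, -1, -1, -1, 3, -1, -1, 3, -1, 3, -1, 3, -1, 3, -1, -1, -1;
    -1, -1, -1, -1, 3, 3, -1, 3, -1, -1, -1, -1, 3, -1, 3, -1, -1, 3, -1, -1, 3, -1, -1, -1;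
    -1, -1, -1, -1, 3, 3, -1, -1, -1, -1, -1, 3, -1, 3, 3, -1, 3, -1, -1, -1, -1, 3, -1, -1;
    -1, -1, -1, -1, 3, -1, 3, -1, -1, -1, 3, 3, -1, 3, -1, 3, -1, -1, 3, -1, -1, -1, -1, -1;
    -1, -1, -1, -1, -1, -1, 3, 3, -1, -1, -1, 3, 3, -1, -1, 3, -1, 3, -1, 3, -1, -1, -1, -1;
    -1, -1, -1, -1, -1, -1, -1, -1, -1, -1, 3, -1, 3, -1, 3, -1, 3, -1, -1, -1, 3, 3, 3, -1;
    -1, -1, -1, -1, -1, 3, -1, 3, -1, 3, 3, -1, 3, -1, -1, -1, -1, -1, -1, 3, -1, -1, 3, -1;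
    -1, -1, -1, -1, -1, 3, -1, 3, -1, -1, 3, 3, -1, -1, -1, 3, -1, -1, -1, -1, 3, 3, -1, -1;
    -1, -1, -1, 3, -1, 3, -1, -1, 3, -1, -1, -1, -1, 3, 3, -1, -1, 3, -1, -1, -1, -1, -1, 3;
    -1, -1, -1, -1, 3, -1, -1, -1, 3, -1, 3, -1, -1, 3, -1, -1, -1, 3, -1, -1, 3, 3, -1, -1;
    -1, -1, -1, 3, -1, -1, -1, -1, 3, -1, 3, -1, 3, 3, -1, -1, -1, -1, 3, -1, -1, -1, 3, -1;
    -1, -1, -1, -1, 3, 3, -1, -1, -1, -1, 3, 3, -1, -1, -1, -1, -1, 3, -1, 3, -1, -1, -1, 3;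
    -1, -1, -1, 3, -1, -1, -1, -1, -1, -1, -1, 3, 3, -1, -1, 3, 3, -1, 3, -1, -1, 3, -1, -1;
    -1, -1, -1, -1, -1, 3, -1, -1, -1, -1, -1, -1, 3, -1, 3, 3, -1, -1, -1, 3, -1, 3, -1, 3;
    -1, -1, -1, 3, -1, -1, -1, -1, 3, -1, -1, -1, -1, -1, -1, 3, -1, -1, -1, -1, 3, 3, 3, 3;
    -1, -1, -1, 3, 3, -1, 3, -1, -1, -1, -1, -1, -1, 3, 3, -1, -1, -1, -1, -1, 3, -1, 3, -1;
    -1, -1, -1, -1, -1, -1, -1, -1, 3, -1, -1, 3, -1, 3, -1, -1, 3, 3, 3, 3, -1, -1, -1, -1;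
    -1, -1, -1, -1, -1, 3, 3, 3, -1, 3, -1, -1, -1, 3, 3, 3, -1, -1, -1, -1, -1, -1, -1, -1;
    -1, -1, -1, -1, 3, -1, -1, -1, 3, -1, -1, -1, 3, -1, -1, 3, -1, 3, 3, -1, -1, -1, -1, 3;
    -1, -1, -1, -1, -1, -1, 3, -1, 3, 3, 3, -1, 3, -1, -1, 3, -1, -1, -1, -1, -1, 3, -1, -1;
    -1, -1, -1, -1, -1, -1, 3, 3, 3, -1, -1, -1, 3, -1, 3, -1, -1, -1, -1, -1, -1, -1, 3, 3;
    -1, -1, -1, -1, -1, -1, -1, -1, 3, 3, 3, -1, -1, -1, -1, -1, 3, 3, -1, -1, -1, -1, 3, 3;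
    -1, -1, -1, 3, 3, -1, -1, -1, -1, -1, -1, -1, -1, 3, -1, -1, -1, -1, 3, 3, -1, 3, -1, 3;
    -1, -1, -1, -1, 3, -1, -1, -1, -1, -1, -1, 3, 3, -1, 3, -1, -1, -1, 3, 3, -1, -1, 3, -1;
    -1, -1, -1, 3, -1, -1, 3, -1, 3, -1, -1, -1, 3, -1, -1, -1, 3, 3, -1, -1, 3, -1, -1, -1;
    -1, -1, -1, -1, -1, -1, -1, 3, -1, 3, -1, -1, -1, -1, 3, -1, -1, 3, 3, 3, -1, -1, -1, 3;
    -1, -1, -1, -1, -1, -1, -1, 3, -1, -1, 3, 3, -1, 3, 3, -1, -1, 3, -1, -1, -1, -1, 3, -1;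
    -1, -1, -1, -1, -1, -1, -1, 3, -1, -1, -1, 3, -1, -1, -1, -1, 3, -1, -1, 3, -1, 3, 3, 3;
    -1, -1, -1, 3, 3, 3, -1, -1, 3, -1, -1, 3, -1, -1, -1, -1, -1, -1, 3, -1, 3, -1, -1, -1;
    -1, -1, -1, 3, -1, -1, -1, 3, -1, -1, -1, -1, -1, 3, -1, 3, -1, 3, 3, -1, 3, -1, -1, -1;
    -1, -1, -1, -1, -1, -1, -1, -1, 3, -1, 3, 3, -1, -1, 3, -1, -1, -1, 3, -1, -1, 3, -1, 3;
    -1, -1, -1, -1, -1, -1, -1, 3, 3, -1, -1, -1, 3, -1, -1, -1, -1, -1, 3, 3, 3, 3, -1, -1;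
    -1, -1, -1, -1, 3, -1, -1, -1, -1, -1, -1, 3, -1, -1, -1, 3, 3, 3, -1, -1, 3, -1, 3, -1;
    -1, -1, -1, -1, -1, -1, 3, -1, -1, -1, -1, -1, -1, 3, -1, 3, 3, -1, -1, 3, 3, 3, -1, -1;
    -1, -1, -1, -1, 3, 3, 3, -1, 3, -1, -1, -1, 3, 3, -1, -1, -1, -1, -1, 3, -1, -1, -1, -1;
    -1, -1, -1, -1, -1, 3, -1, -1, 3, 3, -1, -1, 3, -1, 3, -1, 3, -1, 3, -1, -1, -1, -1, -1;
    -1, -1, -1, 3, -1, -1, 3, 3, 3, -1, -1, 3, -1, 3, -1, -1, -1, -1, -1, -1, -1, 3, -1, -1;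
    -1, -1, -1, 3, -1, 3, -1, -1, -1, 3, 3, -1, -1, -1, -1, 3, -1, -1, 3, -1, -1, -1, -1, 3;
    -1, -1, -1, 3, 3, 3, -1, -1, -1, -1, -1, -1, 3, -1, -1, -1, 3, -1, -1, -1, -1, -1, 3, 3;
    -1, -1, -1, -1, -1, 3, -1, 3, 3, -1, -1, -1, -1, 3, -1, -1, 3, -1, -1, -1, 3, -1, 3, -1;
    -1, -1, -1, -1, 3, -1, -1, 3, -1, -1, -1, -1, 3, 3, -1, 3, -1, -1, -1, -1, -1, 3, 3, -1;
    -1, -1, -1, -1, -1, -1, -1, 3, -1, 3, 3, -1, -1, 3, -1, -1, 3, -1, 3, -1, -1, 3, -1, -1;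
    -1, -1, -1, 3, -1, -1, -1, -1, -1, 3, -1, -1, -1, -1, -1, -1, 3, -1, 3, 3, 3, -1, 3, -1;
    -1, -1, -1, -1, 3, -1, -1, -1, -1, 3, -1, -1, 3, -1, -1, -1, 3, 3, -1, 3, -1, 3, -1, -1;
    -1, -1, -1, -1, -1, 3, -1, -1, -1, -1, 3, -1, 3, 3, -1, 3, 3, 3, -1, -1, -1, -1, -1, -1;
    -1, -1, -1, -1, 3, -1, 3, -1, 3, 3, -1, 3, -1, -1, 3, -1, -1, 3, -1, -1, -1, -1, -1, -1;
    -1, -1, -1, -1, -1, -1, 3, -1, -1, -1, 3, -1, -1, -1, 3, 3, -1, 3, -1, -1, 3, -1, -1, 3;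
    -1, -1, -1, 3, -1, -1, 3, -1, -1, 3, -1, -1, -1, -1, 3, -1, 3, -1, -1, -1, -1, 3, -1, 3;
    -1, -1, -1, -1, 3, -1, 3, -1, -1, 3, -1, -1, -1, -1, -1, 3, -1, -1, -1, 3, -1, -1, 3, 3;
    -1, -1, -1, -1, 3, -1, 3, 3, -1, -1, -1, -1, -1, 3, -1, -1, 3, 3, -1, -1, -1, -1, -1, 3;
    -1, -1, -1, -1, -1, 3, -1, -1, -1, -1, 3, -1, -1, 3, 3, -1, -1, -1, 3, 3, 3, -1, -1, -1;
    -1, -1, -1, 3, -1, -1, -1, 3, -1, -1, 3, -1, 3, -1, -1, -1, -1, 3, -1, -1, -1, 3, -1, 3;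
    -1, -1, -1, 3, -1, -1, 3, -1, -1, 3, 3, -1, -1, 3, -1, -1, -1, 3, -1, 3, -1, -1, -1, -1;
    -1, -1, -1, -1, 3, -1, -1, 3, -1, -1, 3, -1, -1, -1, -1, -1, -1, -1, 3, -1, 3, -1, 3, 3;
    -1, -1, -1, -1, -1, -1, 3, -1, -1, -1, 3, -1, 3, -1, -1, -1, 3, -1, 3, 3, -1, -1, -1, 3;
    -1, -1, -1, -1, 3, 3, 3, -1, -1, 3, 3, -1, -1, -1, -1, -1, 3, -1, -1, -1, 3, -1, -1, -1;
    -1, -1, -1, 3, -1, 3, 3, 3, -1, -1, -1, -1, -1, -1, -1, -1, -1, -1, -1, 3, 3, -1, -1, 3;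
    -1, -1, -1, -1, -1, -1, -1, 3, 3, 3, -1, 3, -1, -1, -1, 3, -1, -1, 3, -1, -1, -1, 3, -1;
    -1, -1, -1, 3, -1, 3, -1, 3, -1, 3, -1, 3, -1, -1, -1, -1, 3, 3, -1, -1, -1, -1, -1, -1;
    -1, -1, -1, -1, -1, -1, 3, -1, 3, -1, 3, 3, -1, -1, -1, -1, -1, -1, -1, 3, 3, -1, 3, -1;
    -1, -1, -1, -1, -1, 3, -1, -1, 3, 3, -1, -1, -1, -1, -1, 3, -1, 3, -1, 3, 3, -1, -1, -1;
    -1, -1, -1, 3, -1, 3, -1, -1, -1, -1, -1, 3, -1, 3, -1, 3, -1, -1, -1, 3, -1, -1, 3, -1;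
    -1, -1, -1, -1, 3, -1, -1, -1, -1, 3, -1, -1, -1, -1, 3, 3, -1, -1, 3, -1, 3, 3, -1, -1;
    -1, -1, -1, 3, -1, -1, -1, -1, -1, -1, -1, 3, -1, -1, 3, -1, -1, 3, -1, 3, 3, 3, -1, -1;
    -1, -1, -1, 3, 3, -1, -1, -1, -1, 3, 3, 3, -1, -1, -1, -1, -1, -1, -1, -1, -1, 3, 3, -1;
    -1, -1, -1, -1, -1, -1, -1, -1, -1, -1, -1, -1, -1, 3, 3, 3, 3, -1, 3, -1, -1, -1, 3, 3]

def constraintMatrix : Matrix (Fin 5) (Fin 24) ℤ :=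
  !![1, -1, 0, 0, 0, 0, 0, 0, 0, 0, 0, 0, 0, 0, 0, 0, 0, 0, 0, 0, 0, 0, 0, 0;
    1, 0, -1, 0, 0, 0, 0, 0, 0, 0, 0, 0, 0, 0, 0, 0, 0, 0, 0, 0, 0, 0, 0, 0;
    5, 1, 1, 1, 1, 1, 1, 1, 1, 1, 1, 1, 1, 1, 1, 1, 1, 1, 1, 1, 1, 1, 1, 1;
    0, 1, 1, 0, 0, 0, 0, 0, 0, 1, 0, 1, 1, 1, 0, 0, 0, 0, 0, 0, 1, 0, 0, 1;
    0, 1, 1, 0, 0, 1, 1, 0, 0, 0, 0, 0, 0, 0, 0, 0, 0, 1, 1, 0, 0, 1, 1, 0]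

theorem intVec_constraintMatrix :
    (fun k => intVec (constraintMatrix k)) =
      ![stdBasisR24 0 - stdBasisR24 1, stdBasisR24 0 - stdBasisR24 2, cVec, c1Vec, c2Vec] := by
  funext k
  ext j
  fin_cases k <;> fin_cases j <;>
    simp [intVec, constraintMatrix, cVec, c1Vec, c2Vec, stdBasisR24,
      (by norm_num : (4 : ℝ) + 1 = 5)]

set_option maxRecDepth 8000 in
theorem lineMatrix_dotProduct_self : ∀ i, lineMatrix i ⬝ᵥ lineMatrix i = 80 := by decide

set_option maxRecDepth 100000 in
set_option maxHeartbeats 8000000 in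
theorem abs_lineMatrix_dotProduct_of_lt :
    ∀ i j, i < j → |lineMatrix i ⬝ᵥ lineMatrix j| = 16 := by decide

theorem abs_lineMatrix_dotProduct_of_ne {i j : Fin 72} (h : i ≠ j) :
    |lineMatrix i ⬝ᵥ lineMatrix j| = 16 := by
  rcases h.lt_or_gt with h | h
  · exact abs_lineMatrix_dotProduct_of_lt i j h
  · rw [dotProduct_comm]
    exact abs_lineMatrix_dotProduct_of_lt j i h

set_option maxRecDepth 8000 in
theorem lineMatrix_dotProduct_constraintMatrix :
    ∀ i k, lineMatrix i ⬝ᵥ constraintMatrix k = 0 := by decide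

set_option maxRecDepth 8000 in
theorem det_constraintMatrix_mul_transpose :
    (constraintMatrix * constraintMatrixᵀ).det = 1728 := by decide

theorem linearIndependent_constraintMatrix :
    LinearIndependent ℝ fun k => intVec (constraintMatrix k) :=
  linearIndependent_intVec_of_det_ne_zero (by rw [det_constraintMatrix_mul_transpose]; norm_num)

noncomputable def lineVec (i : Fin 72) : EuclideanSpace ℝ (Fin 24) :=
  (√80)⁻¹ • intVec (lineMatrix i)

theorem norm_lineVec (i : Fin 72) : ‖lineVec i‖ = 1 :=
  norm_inv_sqrt_smul_of_inner_self (by norm_num) <| by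
    rw [inner_intVec, lineMatrix_dotProduct_self]
    norm_num

theorem abs_inner_lineVec {i j : Fin 72} (h : i ≠ j) : |⟪lineVec i, lineVec j⟫| = 1 / 5 := by
  rw [lineVec, lineVec, real_inner_inv_sqrt_smul (by norm_num), inner_intVec, abs_div,
    ← Int.cast_abs, abs_lineMatrix_dotProduct_of_ne h]
  norm_num

theorem inner_lineVec_intVec_constraintMatrix (i : Fin 72) (k : Fin 5) :
    ⟪lineVec i, intVec (constraintMatrix k)⟫ = 0 := by
  rw [lineVec, real_inner_smul_left, inner_intVec, lineMatrix_dotProduct_constraintMatrix,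
    Int.cast_zero, mul_zero]

theorem inner_lineVec_constraint (i : Fin 72) (k : Fin 5) :
    ⟪lineVec i, ![stdBasisR24 0 - stdBasisR24 1, stdBasisR24 0 - stdBasisR24 2, cVec, c1Vec,
      c2Vec] k⟫ = 0 := by
  rw [← intVec_constraintMatrix]
  exact inner_lineVec_intVec_constraintMatrix i k

end Equiangular72

/-- There exist 72 unit vectors in `ℝ^24`, pairwise equiangular with angle
`arccos (1/5)`, each orthogonal to `e₁ - e₂`, `e₁ - e₃`, `c`, `c₁` and `c₂`; in
particular they lie in a 19-dimensional subspace of `ℝ^24` and form 72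
equiangular lines in `ℝ^19`. -/
theorem equiangular_72_lines_in_R24 :
    ∃ v : Fin 72 → EuclideanSpace ℝ (Fin 24),
      (∀ i, ‖v i‖ = 1) ∧
      (∀ i j, i ≠ j → |(inner ℝ (v i) (v j) : ℝ)| = 1 / 5) ∧
      (∀ i, (inner ℝ (v i) (stdBasisR24 0 - stdBasisR24 1) : ℝ) = 0) ∧
      (∀ i, (inner ℝ (v i) (stdBasisR24 0 - stdBasisR24 2) : ℝ) = 0) ∧
      (∀ i, (inner ℝ (v i) cVec : ℝ) = 0) ∧
      (∀ i, (inner ℝ (v i) c1Vec : ℝ) = 0) ∧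
      (∀ i, (inner ℝ (v i) c2Vec : ℝ) = 0) ∧
      ∃ W : Submodule ℝ (EuclideanSpace ℝ (Fin 24)),
        Module.finrank ℝ W = 19 ∧ ∀ i, v i ∈ W := by
  refine ⟨Equiangular72.lineVec, Equiangular72.norm_lineVec,
    fun _ _ => Equiangular72.abs_inner_lineVec, (Equiangular72.inner_lineVec_constraint · 0),
    (Equiangular72.inner_lineVec_constraint · 1), (Equiangular72.inner_lineVec_constraint · 2),
    (Equiangular72.inner_lineVec_constraint · 3), (Equiangular72.inner_lineVec_constraint · 4),
    (span ℝ (Set.range fun k => intVec (Equiangular72.constraintMatrix k)))ᗮ, ?_,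
    fun i => mem_orthogonal_span_range_iff.2
      (Equiangular72.inner_lineVec_intVec_constraintMatrix i)⟩
  rw [finrank_orthogonal_span_range Equiangular72.linearIndependent_constraintMatrix,
    finrank_euclideanSpace, Fintype.card_fin, Fintype.card_fin]
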